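/- Let a_1,...,a_n : X → ℝ be continuous with a_j ≥ b_0 > 0, V : X → ℝ continuous and bounded below, and [a,b] ⊂ ℝ. Then the set K_{[a,b]} = {x ∈ X : ∃ k ∈ ℤ_+^n, Λ_k(x) ∈ [a,b]} is closed, where Λ_k(x) = Σ_j (2k_j+1)a_j(x) + V(x). -/
import Mathlib


/-- with `a_j : X → ℝ` continuous, `a_j ≥ b_0 > 0`, `V` continuous and
bounded below, the set `K_{[a,b]} = {x : ∃ k ∈ ℤ_+^n, Λ_k(x) ∈ [a,b]}` is closed, where
`Λ_k(x) = Σ_j (2k_j+1)a_j(x) + V(x)`. -/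
theorem stmt_16 {X : Type*} [MetricSpace X] (n : ℕ) (b0 : ℝ) (hb0 : 0 < b0)
    (a : Fin n → X → ℝ) (haCont : ∀ j, Continuous (a j))
    (ha : ∀ j x, b0 ≤ a j x)
    (V : X → ℝ) (hVCont : Continuous V) (hVbdd : BddBelow (Set.range V))
    (A B : ℝ) :
    IsClosed {x : X | ∃ k : Fin n → ℕ,
      (∑ j, (2 * (k j : ℝ) + 1) * a j x + V x) ∈ Set.Icc A B} := by
  obtain ⟨c, hc⟩ := hVbdd
  set M : ℕ := ⌈(B - c) / (2 * b0)⌉₊ with hM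
  have key : {x : X | ∃ k : Fin n → ℕ,
      (∑ j, (2 * (k j : ℝ) + 1) * a j x + V x) ∈ Set.Icc A B}
      = ⋃ (k : Fin n → Fin (M + 1)),
        {x : X | (∑ j, (2 * ((k j : ℕ) : ℝ) + 1) * a j x + V x) ∈ Set.Icc A B} := by
    ext x
    simp only [Set.mem_setOf_eq, Set.mem_iUnion]
    constructor
    · rintro ⟨k, hk⟩
      have hV : c ≤ V x := hc ⟨x, rfl⟩
      have hterm : ∀ i ∈ Finset.univ, (0 : ℝ) ≤ (2 * (k i : ℝ) + 1) * a i x := by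
        intro i _
        have h1 : (0 : ℝ) ≤ 2 * (k i : ℝ) + 1 := by positivity
        exact mul_nonneg h1 (le_trans hb0.le (ha i x))
      have hbnd : ∀ j, k j ≤ M := by
        intro j
        have hsum : (2 * (k j : ℝ) + 1) * a j x ≤ ∑ i, (2 * (k i : ℝ) + 1) * a i x :=
          Finset.single_le_sum hterm (Finset.mem_univ j)
        have htj : (2 * (k j : ℝ) + 1) * b0 ≤ (2 * (k j : ℝ) + 1) * a j x := by
          have h1 : (0 : ℝ) ≤ 2 * (k j : ℝ) + 1 := by positivity
          exact mul_le_mul_of_nonneg_left (ha j x) h1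
        have hB : ∑ i, (2 * (k i : ℝ) + 1) * a i x + V x ≤ B := hk.2
        have h2 : (2 * (k j : ℝ) + 1) * b0 ≤ B - c := by linarith
        have h3 : (k j : ℝ) ≤ (B - c) / (2 * b0) := by
          rw [le_div_iff₀ (by positivity)]
          nlinarith
        have h4 : (k j : ℝ) ≤ (M : ℝ) := h3.trans (Nat.le_ceil _)
        exact_mod_cast h4
      exact ⟨fun j => ⟨k j, Nat.lt_succ_of_le (hbnd j)⟩, hk⟩
    · rintro ⟨k, hk⟩
      exact ⟨fun j => (k j : ℕ), hk⟩
  rw [key]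
  refine isClosed_iUnion_of_finite fun k => ?_
  have hcont : Continuous fun x => ∑ j, (2 * ((k j : ℕ) : ℝ) + 1) * a j x + V x :=
    (continuous_finset_sum _ fun j _ => continuous_const.mul (haCont j)).add hVCont
  exact IsClosed.preimage hcont isClosed_Icc
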